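/- Let ⊕ be a sum of open sets in ℝ^d satisfying the six requirements in the essential sense. Then the bulked sum (A, B) ↦ bulk(A ⊕ B) satisfies the six requirements exactly (with exact containment and equality in place of essential containment and essential equality), and for all bounded open A, B, A', B' with A essentially equal to A' and B essentially equal to B', the set bulk(A ⊕ B) is essentially equal to A' ⊕ B'. -/

import Mathlib

open MeasureTheory Metric Bornology

/-- Points of `ℝ^d`. -/
abbrev Pt (d : ℕ) := EuclideanSpace ℝ (Fin d)

/-- A cubic isometry: a linear isometry of ℝ^d mapping the cube [−1,1]^d to itself. -/
def CubicIsometry {d : ℕ} (U : Pt d ≃ₗᵢ[ℝ] Pt d) : Prop :=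
  ⇑U '' {y : Pt d | ∀ i, |y i| ≤ 1} = {y : Pt d | ∀ i, |y i| ≤ 1}

/-- A bounded open set. -/
def GoodSet {d : ℕ} (A : Set (Pt d)) : Prop := IsOpen A ∧ Bornology.IsBounded A

/-- A sum of open sets satisfying the six requirements exactly: it sends bounded open
sets to open sets and is monotone, commutative, associative (when the intermediate sums
are bounded), translation invariant, invariant under cubic isometries, and conserves
Lebesgue measure. -/
structure SumAxioms (d : ℕ) (Φ : Set (Pt d) → Set (Pt d) → Set (Pt d)) : Prop where
  isOpen : ∀ A B, GoodSet A → GoodSet B → IsOpen (Φ A B)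
  subset_sum : ∀ A B, GoodSet A → GoodSet B → A ⊆ Φ A B
  mono : ∀ A B C, GoodSet A → GoodSet B → GoodSet C → A ⊆ B → Φ A C ⊆ Φ B C
  comm : ∀ A B, GoodSet A → GoodSet B → Φ A B = Φ B A
  assoc : ∀ A B C, GoodSet A → GoodSet B → GoodSet C →
      Bornology.IsBounded (Φ A B) → Bornology.IsBounded (Φ B C) →
      Φ (Φ A B) C = Φ A (Φ B C)
  translate : ∀ (A B : Set (Pt d)) (x : Pt d), GoodSet A → GoodSet B →
      Φ ((· + x) '' A) ((· + x) '' B) = (· + x) '' (Φ A B)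
  rotate : ∀ (A B : Set (Pt d)) (U : Pt d ≃ₗᵢ[ℝ] Pt d), CubicIsometry U →
      GoodSet A → GoodSet B → Φ (⇑U '' A) (⇑U '' B) = ⇑U '' (Φ A B)
  conserve : ∀ A B, GoodSet A → GoodSet B → volume (Φ A B) = volume A + volume B

/-- `A` is essentially contained in `B`: λ(A \ B) = 0. -/
def EssSubset {d : ℕ} (A B : Set (Pt d)) : Prop := volume (A \ B) = 0

/-- `A` and `B` are essentially equal: λ(A Δ B) = 0. -/
def EssEq {d : ℕ} (A B : Set (Pt d)) : Prop := volume (symmDiff A B) = 0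

/-- A sum of open sets satisfying the six requirements in the essential sense: it sends
bounded open sets to open sets and is essentially monotone, essentially commutative,
essentially associative (when the intermediate sums are bounded), essentially translation
invariant, essentially invariant under cubic isometries, and conserves Lebesgue measure. -/
structure EssSumAxioms (d : ℕ) (Φ : Set (Pt d) → Set (Pt d) → Set (Pt d)) : Prop where
  isOpen : ∀ A B, GoodSet A → GoodSet B → IsOpen (Φ A B)
  subset_sum : ∀ A B, GoodSet A → GoodSet B → EssSubset A (Φ A B)
  mono : ∀ A B C, GoodSet A → GoodSet B → GoodSet C → A ⊆ B → EssSubset (Φ A C) (Φ B C)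
  comm : ∀ A B, GoodSet A → GoodSet B → EssEq (Φ A B) (Φ B A)
  assoc : ∀ A B C, GoodSet A → GoodSet B → GoodSet C →
      Bornology.IsBounded (Φ A B) → Bornology.IsBounded (Φ B C) →
      EssEq (Φ (Φ A B) C) (Φ A (Φ B C))
  translate : ∀ (A B : Set (Pt d)) (x : Pt d), GoodSet A → GoodSet B →
      EssEq (Φ ((· + x) '' A) ((· + x) '' B)) ((· + x) '' (Φ A B))
  rotate : ∀ (A B : Set (Pt d)) (U : Pt d ≃ₗᵢ[ℝ] Pt d), CubicIsometry U →
      GoodSet A → GoodSet B → EssEq (Φ (⇑U '' A) (⇑U '' B)) (⇑U '' (Φ A B))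
  conserve : ∀ A B, GoodSet A → GoodSet B → volume (Φ A B) = volume A + volume B

/-- An open set is *bulky* if it contains every open set essentially equal to it
(i.e. whose symmetric difference with it has Lebesgue measure zero). -/
def Bulky {d : ℕ} (U : Set (Pt d)) : Prop :=
  IsOpen U ∧ ∀ V : Set (Pt d), IsOpen V → volume (symmDiff V U) = 0 → V ⊆ U

/-- `bulk A` is the bulky open set essentially equal to an open set `A`: the union of all
open sets essentially contained in `A`. -/
def bulk {d : ℕ} (A : Set (Pt d)) : Set (Pt d) :=
  ⋃₀ {B : Set (Pt d) | IsOpen B ∧ volume (B \ A) = 0}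

section BulkAux

variable {d : ℕ}

lemma essEq_iff {A B : Set (Pt d)} :
    EssEq A B ↔ volume (A \ B) = 0 ∧ volume (B \ A) = 0 := by
  rw [EssEq, Set.symmDiff_def, measure_union_null_iff]

lemma essEq_refl (A : Set (Pt d)) : EssEq A A := by simp [essEq_iff]

lemma essEq_symm {A B : Set (Pt d)} (h : EssEq A B) : EssEq B A :=
  essEq_iff.2 ⟨(essEq_iff.1 h).2, (essEq_iff.1 h).1⟩

lemma null_diff_trans {A B C : Set (Pt d)} (h1 : volume (A \ B) = 0)
    (h2 : volume (B \ C) = 0) : volume (A \ C) = 0 := by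
  refine measure_mono_null (fun x hx => ?_) (measure_union_null h1 h2)
  by_cases hB : x ∈ B
  · exact Or.inr ⟨hB, hx.2⟩
  · exact Or.inl ⟨hx.1, hB⟩

lemma essEq_trans {A B C : Set (Pt d)} (h1 : EssEq A B) (h2 : EssEq B C) :
    EssEq A C := by
  rw [essEq_iff] at *
  exact ⟨null_diff_trans h1.1 h2.1, null_diff_trans h2.2 h1.2⟩

lemma essEq_volume {A B : Set (Pt d)} (h : EssEq A B) : volume A = volume B :=
  measure_congr (measure_symmDiff_eq_zero_iff.1 h)

lemma isOpen_bulk (A : Set (Pt d)) : IsOpen (bulk A) :=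
  isOpen_sUnion fun _ hB => hB.1

lemma subset_bulk {A : Set (Pt d)} (hA : IsOpen A) : A ⊆ bulk A :=
  Set.subset_sUnion_of_mem ⟨hA, by simp⟩

lemma bulk_diff_null (A : Set (Pt d)) : volume (bulk A \ A) = 0 := by
  obtain ⟨T, hTc, hTsub, hTU⟩ := TopologicalSpace.isOpen_sUnion_countable
    {B : Set (Pt d) | IsOpen B ∧ volume (B \ A) = 0} (fun s hs => hs.1)
  have : bulk A \ A = ⋃ B ∈ T, (B \ A) := by
    rw [bulk, ← hTU]
    ext x
    simp only [Set.mem_diff, Set.mem_sUnion, Set.mem_iUnion]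
    tauto
  rw [this]
  exact (measure_biUnion_null_iff hTc).2 fun B hB => (hTsub hB).2

lemma bulk_mono {A B : Set (Pt d)} (h : volume (A \ B) = 0) :
    bulk A ⊆ bulk B := by
  refine Set.sUnion_subset ?_
  rintro C ⟨hC, hC0⟩
  exact Set.subset_sUnion_of_mem ⟨hC, null_diff_trans hC0 h⟩

lemma bulk_congr {A B : Set (Pt d)} (h : EssEq A B) : bulk A = bulk B :=
  subset_antisymm (bulk_mono (essEq_iff.1 h).1) (bulk_mono (essEq_iff.1 h).2)

lemma essEq_bulk {A : Set (Pt d)} (hA : IsOpen A) : EssEq (bulk A) A :=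
  essEq_iff.2 ⟨bulk_diff_null A, by
    rw [Set.diff_eq_empty.2 (subset_bulk hA)]; exact measure_empty⟩

lemma bulk_image_subset {f : Pt d → Pt d} (hinj : Function.Injective f)
    (hopen : IsOpenMap f) (hnull : ∀ s : Set (Pt d), volume s = 0 → volume (f '' s) = 0)
    (S : Set (Pt d)) : f '' bulk S ⊆ bulk (f '' S) := by
  rintro _ ⟨x, hx, rfl⟩
  obtain ⟨B, ⟨hBo, hB0⟩, hxB⟩ := hx
  refine Set.mem_sUnion.2 ⟨f '' B, ⟨hopen B hBo, ?_⟩, ⟨x, hxB, rfl⟩⟩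
  rw [← Set.image_diff hinj]
  exact hnull _ hB0

lemma bulk_image {f g : Pt d → Pt d} (hfg : Function.LeftInverse g f)
    (hgf : Function.RightInverse g f) (hfo : IsOpenMap f) (hgo : IsOpenMap g)
    (hfn : ∀ s : Set (Pt d), volume s = 0 → volume (f '' s) = 0)
    (hgn : ∀ s : Set (Pt d), volume s = 0 → volume (g '' s) = 0)
    (S : Set (Pt d)) : bulk (f '' S) = f '' bulk S := by
  refine subset_antisymm ?_ (bulk_image_subset hfg.injective hfo hfn S)
  have h1 : g '' bulk (f '' S) ⊆ bulk (g '' (f '' S)) :=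
    bulk_image_subset hgf.injective hgo hgn _
  have h2 : g '' (f '' S) = S := by
    rw [← Set.image_comp, show (g ∘ f) = id from funext hfg, Set.image_id]
  intro y hy
  have : f (g y) ∈ f '' bulk S := ⟨g y, h2 ▸ h1 ⟨y, hy, rfl⟩, rfl⟩
  rwa [hgf y] at this

lemma essEq_of_essSubset_of_le {X Y : Set (Pt d)} (hX : MeasurableSet X)
    (hXfin : volume X ≠ ⊤) (h : volume (X \ Y) = 0) (hv : volume Y ≤ volume X) :
    EssEq X Y := by
  refine essEq_iff.2 ⟨h, ?_⟩
  have key : volume (Y ∩ X) + volume (Y \ X) = volume Y :=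
    measure_inter_add_diff Y hX
  have hXle : volume X ≤ volume (Y ∩ X) := by
    calc volume X = volume ((X ∩ Y) ∪ (X \ Y)) := by rw [Set.inter_union_diff]
      _ ≤ volume (X ∩ Y) + volume (X \ Y) := measure_union_le _ _
      _ = volume (Y ∩ X) := by rw [h, add_zero, Set.inter_comm]
  have hfin : volume (Y ∩ X) ≠ ⊤ :=
    fun ht => hXfin (top_le_iff.1 (ht ▸ measure_mono Set.inter_subset_right))
  have : volume (Y ∩ X) + volume (Y \ X) ≤ volume (Y ∩ X) + 0 := by
    rw [add_zero]
    exact key.le.trans (hv.trans hXle)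
  simpa using (ENNReal.add_le_add_iff_left hfin).1 this

lemma phi_finite {Φ : Set (Pt d) → Set (Pt d) → Set (Pt d)} (hax : EssSumAxioms d Φ)
    {A B : Set (Pt d)} (hA : GoodSet A) (hB : GoodSet B) : volume (Φ A B) ≠ ⊤ := by
  rw [hax.conserve A B hA hB]
  exact ENNReal.add_ne_top.2 ⟨hA.2.measure_lt_top.ne, hB.2.measure_lt_top.ne⟩

lemma phi_congr_aux {Φ : Set (Pt d) → Set (Pt d) → Set (Pt d)} (hax : EssSumAxioms d Φ)
    {I C B : Set (Pt d)} (hI : GoodSet I) (hC : GoodSet C) (hB : GoodSet B)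
    (hsub : I ⊆ C) (hvol : volume C = volume I) : EssEq (Φ I B) (Φ C B) := by
  have h1 : volume (Φ I B \ Φ C B) = 0 := hax.mono I C B hI hC hB hsub
  have h2 : volume (Φ C B) ≤ volume (Φ I B) := by
    rw [hax.conserve I B hI hB, hax.conserve C B hC hB, hvol]
  exact essEq_of_essSubset_of_le (hax.isOpen I B hI hB).measurableSet
    (phi_finite hax hI hB) h1 h2

lemma phi_congr_left {Φ : Set (Pt d) → Set (Pt d) → Set (Pt d)} (hax : EssSumAxioms d Φ)
    {A A' B : Set (Pt d)} (hA : GoodSet A) (hA' : GoodSet A') (hB : GoodSet B)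
    (h : EssEq A A') : EssEq (Φ A B) (Φ A' B) := by
  have hI : GoodSet (A ∩ A') := ⟨hA.1.inter hA'.1, hA.2.subset Set.inter_subset_left⟩
  have hv1 : volume A = volume (A ∩ A') := by
    rw [← measure_inter_add_diff A hA'.1.measurableSet, (essEq_iff.1 h).1, add_zero]
  have hv2 : volume A' = volume (A ∩ A') := by
    rw [← measure_inter_add_diff A' hA.1.measurableSet, (essEq_iff.1 h).2, add_zero,
      Set.inter_comm]
  exact essEq_trans
    (essEq_symm (phi_congr_aux hax hI hA hB Set.inter_subset_left hv1))
    (phi_congr_aux hax hI hA' hB Set.inter_subset_right hv2)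

lemma phi_congr_right {Φ : Set (Pt d) → Set (Pt d) → Set (Pt d)} (hax : EssSumAxioms d Φ)
    {A B B' : Set (Pt d)} (hA : GoodSet A) (hB : GoodSet B) (hB' : GoodSet B')
    (h : EssEq B B') : EssEq (Φ A B) (Φ A B') :=
  essEq_trans (hax.comm A B hA hB)
    (essEq_trans (phi_congr_left hax hB hB' hA h) (hax.comm B' A hB' hA))

lemma translate_null {d : ℕ} (x : Pt d) (s : Set (Pt d)) (h : volume s = 0) :
    volume ((· + x) '' s) = 0 := by
  have : (· + x) '' s = (· + (-x)) ⁻¹' s := by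
    ext y
    simp only [Set.mem_image, Set.mem_preimage]
    constructor
    · rintro ⟨a, ha, rfl⟩; simpa
    · intro hy; exact ⟨y + (-x), hy, by simp⟩
  rw [this]
  exact (measurePreserving_add_right volume (-x)).quasiMeasurePreserving.preimage_null h

lemma rotate_null {d : ℕ} (U : Pt d ≃ₗᵢ[ℝ] Pt d) (s : Set (Pt d)) (h : volume s = 0) :
    volume (⇑U '' s) = 0 := by
  have : ⇑U '' s = ⇑U.symm ⁻¹' s := by
    ext y
    simp only [Set.mem_image, Set.mem_preimage]
    constructor
    · rintro ⟨a, ha, rfl⟩; simpa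
    · intro hy; exact ⟨U.symm y, hy, by simp⟩
  rw [this]
  exact U.symm.measurePreserving.quasiMeasurePreserving.preimage_null h

end BulkAux

/-- If a sum of open sets ⊕ satisfies the six requirements in the essential
sense, then the bulked sum (A, B) ↦ bulk(A ⊕ B) satisfies the six requirements exactly,
and whenever A, A' and B, B' are essentially equal bounded open sets, bulk(A ⊕ B) is
essentially equal to A' ⊕ B'. -/
theorem bulked_sum_satisfies_axioms (d : ℕ)
    (Φ : Set (Pt d) → Set (Pt d) → Set (Pt d)) (hax : EssSumAxioms d Φ) :
    SumAxioms d (fun A B => bulk (Φ A B)) ∧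
      ∀ A B A' B' : Set (Pt d), GoodSet A → GoodSet B → GoodSet A' → GoodSet B' →
        EssEq A A' → EssEq B B' → EssEq (bulk (Φ A B)) (Φ A' B') := by
  have hbeq : ∀ A B : Set (Pt d), GoodSet A → GoodSet B →
      EssEq (bulk (Φ A B)) (Φ A B) :=
    fun A B hA hB => essEq_bulk (hax.isOpen A B hA hB)
  constructor
  · refine ⟨?_, ?_, ?_, ?_, ?_, ?_, ?_, ?_⟩
    · exact fun A B _ _ => isOpen_bulk _
    · exact fun A B hA hB => Set.subset_sUnion_of_mem ⟨hA.1, hax.subset_sum A B hA hB⟩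
    · exact fun A B C hA hB hC hAB => bulk_mono (hax.mono A B C hA hB hC hAB)
    · exact fun A B hA hB => bulk_congr (hax.comm A B hA hB)
    · -- associativity
      intro A B C hA hB hC hb1 hb2
      have hPo := hax.isOpen A B hA hB
      have hQo := hax.isOpen B C hB hC
      have hPb : Bornology.IsBounded (Φ A B) := hb1.subset (subset_bulk hPo)
      have hQb : Bornology.IsBounded (Φ B C) := hb2.subset (subset_bulk hQo)
      have hP : GoodSet (Φ A B) := ⟨hPo, hPb⟩
      have hQ : GoodSet (Φ B C) := ⟨hQo, hQb⟩
      have hbP : GoodSet (bulk (Φ A B)) := ⟨isOpen_bulk _, hb1⟩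
      have hbQ : GoodSet (bulk (Φ B C)) := ⟨isOpen_bulk _, hb2⟩
      apply bulk_congr
      have e1 : EssEq (Φ (bulk (Φ A B)) C) (Φ (Φ A B) C) :=
        phi_congr_left hax hbP hP hC (hbeq A B hA hB)
      have e2 := hax.assoc A B C hA hB hC hPb hQb
      have e3 : EssEq (Φ A (Φ B C)) (Φ A (bulk (Φ B C))) :=
        phi_congr_right hax hA hQ hbQ (essEq_symm (hbeq B C hB hC))
      exact essEq_trans e1 (essEq_trans e2 e3)
    · -- translation invariance
      intro A B x hA hB
      rw [bulk_congr (hax.translate A B x hA hB)]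
      refine bulk_image (f := (· + x)) (g := (· + (-x)))
        (fun a => by simp) (fun a => by simp) ?_ ?_
        (translate_null x) (translate_null (-x)) _
      · have : ((· + x) : Pt d → Pt d) = ⇑(Homeomorph.addRight x) := rfl
        rw [this]; exact (Homeomorph.addRight x).isOpenMap
      · have : ((· + (-x)) : Pt d → Pt d) = ⇑(Homeomorph.addRight (-x)) := rfl
        rw [this]; exact (Homeomorph.addRight (-x)).isOpenMap
    · -- rotation invariance
      intro A B U hU hA hB
      rw [bulk_congr (hax.rotate A B U hU hA hB)]
      refine bulk_image (f := ⇑U) (g := ⇑U.symm)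
        (fun a => by simp) (fun a => by simp) ?_ ?_
        (rotate_null U) (rotate_null U.symm) _
      · exact U.toHomeomorph.isOpenMap
      · exact U.symm.toHomeomorph.isOpenMap
    · intro A B hA hB
      rw [essEq_volume (hbeq A B hA hB), hax.conserve A B hA hB]
  · intro A B A' B' hA hB hA' hB' hAA hBB
    exact essEq_trans (hbeq A B hA hB)
      (essEq_trans (phi_congr_left hax hA hA' hB hAA)
        (phi_congr_right hax hA' hB hB' hBB))
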